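/- arXiv:1801.01238 — 2 statements merged into one kernel-verified Lean document; each statement's English description precedes it below -/
import Mathlib

section
/- For a continuous semiflow φ on a compact metric space X, the modified separated-set and spanning-set entropies both equal Bowen's topological entropy: ĥ_r(φ) = ĥ_s(φ) = h_top(φ). -/
open Set Filter
open scoped ENNReal NNReal Classical Real


open Set Filter

variable {α : Type*}

/-- A (not necessarily continuous) semiflow on `α`, parameterized by nonnegative real times. -/
def IsSemiflow (φ : ℝ → α → α) : Prop :=
  (∀ x, φ 0 x = x) ∧ ∀ s t : ℝ, 0 ≤ s → 0 ≤ t → ∀ x, φ (s + t) x = φ s (φ t x)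

/-- A continuous semiflow. -/
def IsContSemiflow [TopologicalSpace α] (φ : ℝ → α → α) : Prop :=
  IsSemiflow φ ∧ ContinuousOn (fun p : ℝ × α => φ p.1 p.2) (Set.Ici 0 ×ˢ Set.univ)

/-- The pseudosemimetric `d_δ^φ(x,y) = inf { d(φ_s x, φ_s y) : s ∈ [0,δ) }`. -/
noncomputable def dDelta (d : α → α → ℝ) (φ : ℝ → α → α) (δ : ℝ) (x y : α) : ℝ :=
  sInf ((fun s => d (φ s x) (φ s y)) '' Set.Ico 0 δ)

/-- The modified dynamical ball `B̂(x,φ,T,ε,δ)`. -/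
def ballHat (d : α → α → ℝ) (φ : ℝ → α → α) (T ε δ : ℝ) (x : α) : Set α :=
  {y | ∀ t ∈ Set.Icc (0:ℝ) T, dDelta d φ δ (φ t x) (φ t y) < ε}

/-- The classical Bowen dynamical ball `B(x,φ,T,ε)`. -/
def ballB (d : α → α → ℝ) (φ : ℝ → α → α) (T ε : ℝ) (x : α) : Set α :=
  {y | ∀ t ∈ Set.Icc (0:ℝ) T, d (φ t x) (φ t y) < ε}

/-- `(φ,T,ε,δ)`-separated set. -/
def sepHat (d : α → α → ℝ) (φ : ℝ → α → α) (T ε δ : ℝ) (E : Set α) : Prop :=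
  ∀ x ∈ E, E ∩ ballHat d φ T ε δ x = {x}

/-- `(φ,T,ε,δ)`-spanning set for the subset `S`. -/
def spanHat (d : α → α → ℝ) (φ : ℝ → α → α) (S : Set α) (T ε δ : ℝ) (F : Set α) : Prop :=
  F ⊆ S ∧ S ⊆ ⋃ y ∈ F, ballHat d φ T ε δ y

/-- Classical `(φ,T,ε)`-separated set. -/
def sepB (d : α → α → ℝ) (φ : ℝ → α → α) (T ε : ℝ) (E : Set α) : Prop :=
  ∀ x ∈ E, E ∩ ballB d φ T ε x = {x}

/-- Classical `(φ,T,ε)`-spanning set for the subset `S`. -/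
def spanB (d : α → α → ℝ) (φ : ℝ → α → α) (S : Set α) (T ε : ℝ) (F : Set α) : Prop :=
  F ⊆ S ∧ S ⊆ ⋃ y ∈ F, ballB d φ T ε y

/-- `ŝ(φ,T,ε,δ)`: sup of cardinalities of separated subsets of `S`. -/
noncomputable def sHat (d : α → α → ℝ) (φ : ℝ → α → α) (S : Set α) (T ε δ : ℝ) : ℕ∞ :=
  ⨆ (E : Set α) (_ : E ⊆ S ∧ sepHat d φ T ε δ E), E.encard

/-- `r̂(φ,T,ε,δ)`: inf of cardinalities of spanning sets. -/
noncomputable def rHat (d : α → α → ℝ) (φ : ℝ → α → α) (S : Set α) (T ε δ : ℝ) : ℕ∞ :=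
  ⨅ (F : Set α) (_ : spanHat d φ S T ε δ F), F.encard

noncomputable def sB (d : α → α → ℝ) (φ : ℝ → α → α) (S : Set α) (T ε : ℝ) : ℕ∞ :=
  ⨆ (E : Set α) (_ : E ⊆ S ∧ sepB d φ T ε E), E.encard

noncomputable def rB (d : α → α → ℝ) (φ : ℝ → α → α) (S : Set α) (T ε : ℝ) : ℕ∞ :=
  ⨅ (F : Set α) (_ : spanB d φ S T ε F), F.encard

/-- Extended logarithm on `ℕ∞`, with `log ∞ = ∞` and `log 0 = -∞`. -/
noncomputable def elog (x : ℕ∞) : EReal :=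
  if x = ⊤ then ⊤ else if x = 0 then ⊥ else ((Real.log (x.toNat : ℝ) : ℝ) : EReal)

/-- Exponential growth rate `limsup_{T→∞} (1/T) log f(T)`. -/
noncomputable def rate (f : ℝ → ℕ∞) : EReal :=
  Filter.limsup (fun T : ℝ => ((T⁻¹ : ℝ) : EReal) * elog (f T)) Filter.atTop

/-- The modified separated-set entropy `ĥ_s(φ)` (on the subset `S`); since the quantities are
monotone in `ε` and `δ`, the limits `ε → 0⁺`, `δ → 0⁺` are suprema. -/
noncomputable def hHatS (d : α → α → ℝ) (φ : ℝ → α → α) (S : Set α) : EReal :=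
  ⨆ (δ : ℝ) (_ : 0 < δ) (ε : ℝ) (_ : 0 < ε), rate (fun T => sHat d φ S T ε δ)

/-- The modified spanning-set entropy `ĥ_r(φ)`. -/
noncomputable def hHatR (d : α → α → ℝ) (φ : ℝ → α → α) (S : Set α) : EReal :=
  ⨆ (δ : ℝ) (_ : 0 < δ) (ε : ℝ) (_ : 0 < ε), rate (fun T => rHat d φ S T ε δ)

/-- Bowen's classical separated-set entropy `h_s(φ)`. -/
noncomputable def hSB (d : α → α → ℝ) (φ : ℝ → α → α) (S : Set α) : EReal :=
  ⨆ (ε : ℝ) (_ : 0 < ε), rate (fun T => sB d φ S T ε)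

/-- Bowen's classical spanning-set entropy `h_r(φ)`. -/
noncomputable def hRB (d : α → α → ℝ) (φ : ℝ → α → α) (S : Set α) : EReal :=
  ⨆ (ε : ℝ) (_ : 0 < ε), rate (fun T => rB d φ S T ε)



section EntropyAux

open Metric

variable {X : Type*} [MetricSpace X] {φ : ℝ → X → X}

private lemma dDelta_bdd (δ : ℝ) (x y : X) :
    BddBelow ((fun s => dist (φ s x) (φ s y)) '' Set.Ico 0 δ) :=
  ⟨0, by rintro r ⟨s, _, rfl⟩; exact dist_nonneg⟩

private lemma dDelta_le {δ s : ℝ} (hs : s ∈ Set.Ico 0 δ) (x y : X) :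
    dDelta dist φ δ x y ≤ dist (φ s x) (φ s y) :=
  csInf_le (dDelta_bdd δ x y) ⟨s, hs, rfl⟩

private lemma dDelta_self {δ : ℝ} (hδ : 0 < δ) (x : X) : dDelta dist φ δ x x = 0 :=
  le_antisymm (by simpa using dDelta_le ⟨le_refl 0, hδ⟩ x x)
    (Real.sInf_nonneg (by rintro r ⟨s, _, rfl⟩; exact dist_nonneg))

private lemma dDelta_comm (δ : ℝ) (x y : X) : dDelta dist φ δ x y = dDelta dist φ δ y x := by
  unfold dDelta
  rw [show (fun s => dist (φ s x) (φ s y)) = fun s => dist (φ s y) (φ s x) from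
    funext fun s => dist_comm _ _]

private lemma dDelta_le_dist (h0 : ∀ z : X, φ 0 z = z) {δ : ℝ} (hδ : 0 < δ) (x y : X) :
    dDelta dist φ δ x y ≤ dist x y := by
  have h := dDelta_le (φ := φ) ⟨le_refl 0, hδ⟩ x y
  rwa [h0, h0] at h

private lemma exists_dDelta_lt {δ : ℝ} (hδ : 0 < δ) {x y : X} {c : ℝ}
    (h : dDelta dist φ δ x y < c) : ∃ s ∈ Set.Ico 0 δ, dist (φ s x) (φ s y) < c := by
  have hne : ((fun s => dist (φ s x) (φ s y)) '' Set.Ico 0 δ).Nonempty :=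
    ⟨_, ⟨0, ⟨le_refl 0, hδ⟩, rfl⟩⟩
  obtain ⟨r, ⟨s, hs, rfl⟩, hr⟩ := exists_lt_of_csInf_lt hne h
  exact ⟨s, hs, hr⟩

private lemma mem_ballB_self {T ε : ℝ} (hε : 0 < ε) (x : X) : x ∈ ballB dist φ T ε x :=
  fun t _ => by simpa using hε

private lemma ballB_comm {T ε : ℝ} {x y : X} :
    y ∈ ballB dist φ T ε x ↔ x ∈ ballB dist φ T ε y := by
  constructor <;> intro h t ht <;> rw [dist_comm] <;> exact h t ht

private lemma mem_ballHat_self {T ε δ : ℝ} (hδ : 0 < δ) (hε : 0 < ε) (x : X) :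
    x ∈ ballHat dist φ T ε δ x :=
  fun t _ => by rw [dDelta_self hδ]; exact hε

private lemma ballHat_comm {T ε δ : ℝ} {x y : X} :
    y ∈ ballHat dist φ T ε δ x ↔ x ∈ ballHat dist φ T ε δ y := by
  constructor <;> intro h t ht <;> rw [dDelta_comm] <;> exact h t ht

private lemma ballB_subset_ballHat (h0 : ∀ z : X, φ 0 z = z) {T ε δ : ℝ} (hδ : 0 < δ) (x : X) :
    ballB dist φ T ε x ⊆ ballHat dist φ T ε δ x :=
  fun y hy t ht => lt_of_le_of_lt (dDelta_le_dist h0 hδ _ _) (hy t ht)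

private lemma sep_of_pairwise {E : Set X} (b : X → Set X) (hself : ∀ x, x ∈ b x)
    (h : ∀ x ∈ E, ∀ y ∈ E, y ∈ b x → y = x) : ∀ x ∈ E, E ∩ b x = {x} := by
  intro x hx
  ext z
  simp only [Set.mem_inter_iff, Set.mem_singleton_iff]
  constructor
  · rintro ⟨hz, hb⟩; exact h x hx z hz hb
  · rintro rfl; exact ⟨hx, hself _⟩

private lemma pairwise_of_sep {E : Set X} {b : X → Set X}
    (h : ∀ x ∈ E, E ∩ b x = {x}) : ∀ x ∈ E, ∀ y ∈ E, y ∈ b x → y = x := by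
  intro x hx y hy hb
  have : y ∈ E ∩ b x := ⟨hy, hb⟩
  rw [h x hx] at this
  exact this

private lemma exists_max_sep (b : X → Set X) (hself : ∀ x, x ∈ b x)
    (hsymm : ∀ {x y : X}, x ∈ b y → y ∈ b x) :
    ∃ E : Set X, (∀ x ∈ E, ∀ y ∈ E, y ∈ b x → y = x) ∧ ∀ z : X, ∃ y ∈ E, z ∈ b y := by
  have hchain : ∀ c ⊆ {E : Set X | ∀ x ∈ E, ∀ y ∈ E, y ∈ b x → y = x},
      IsChain (· ⊆ ·) c → ∃ ub ∈ {E : Set X | ∀ x ∈ E, ∀ y ∈ E, y ∈ b x → y = x},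
        ∀ s ∈ c, s ⊆ ub := by
    intro c hcS hchain
    refine ⟨⋃₀ c, ?_, fun s hs => Set.subset_sUnion_of_mem hs⟩
    rintro x ⟨s, hs, hxs⟩ y ⟨s', hs', hys'⟩ hxy
    rcases hchain.total hs hs' with h | h
    · exact hcS hs' x (h hxs) y hys' hxy
    · exact hcS hs x hxs y (h hys') hxy
  obtain ⟨E, hE, hmax⟩ := zorn_subset {E : Set X | ∀ x ∈ E, ∀ y ∈ E, y ∈ b x → y = x} hchain
  refine ⟨E, hE, ?_⟩
  intro z
  by_contra hcon
  push_neg at hcon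
  have hzE : z ∉ E := fun hz => hcon z hz (hself z)
  have hins : insert z E ∈ {E : Set X | ∀ x ∈ E, ∀ y ∈ E, y ∈ b x → y = x} := by
    rintro x (rfl | hx) y (rfl | hy) hxy
    · rfl
    · exact absurd (hsymm hxy) (hcon y hy)
    · exact absurd hxy (hcon x hx)
    · exact hE x hx y hy hxy
  exact hzE (hmax hins (Set.subset_insert _ _) (Set.mem_insert z E))

private lemma encard_le_of_inj (E F : Set X) (b b' : X → Set X)
    (hsep : ∀ x ∈ E, ∀ y ∈ E, y ∈ b x → y = x)
    (hspan : ∀ z : X, ∃ y ∈ F, z ∈ b' y)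
    (htri : ∀ y x x', x ∈ b' y → x' ∈ b' y → x' ∈ b x) :
    E.encard ≤ F.encard := by
  choose g hgF hgb using hspan
  have himg : g '' E ⊆ F := by rintro _ ⟨x, _, rfl⟩; exact hgF x
  have hinj : Set.InjOn g E := by
    intro x hx x' hx' hgg
    exact (hsep x hx x' hx' (htri (g x) x x' (hgb x) (hgg ▸ hgb x'))).symm
  calc E.encard = (g '' E).encard := hinj.encard_image.symm
    _ ≤ F.encard := Set.encard_mono himg

/-! ### Pointwise counting inequalities -/

private lemma rB_le_sB {T ε : ℝ} (hε : 0 < ε) :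
    rB dist φ Set.univ T ε ≤ sB dist φ Set.univ T ε := by
  obtain ⟨E, hsep, hspan⟩ := exists_max_sep (ballB dist φ T ε) (mem_ballB_self hε)
    (fun h => ballB_comm.1 h)
  have h1 : rB dist φ Set.univ T ε ≤ E.encard := by
    refine iInf₂_le E ⟨Set.subset_univ E, fun z _ => ?_⟩
    obtain ⟨y, hy, hz⟩ := hspan z
    exact Set.mem_biUnion hy hz
  have h2 : E.encard ≤ sB dist φ Set.univ T ε :=
    le_iSup₂ (f := fun (E : Set X) (_ : E ⊆ Set.univ ∧ sepB dist φ T ε E) => E.encard) E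
      ⟨Set.subset_univ E, sep_of_pairwise _ (mem_ballB_self hε) hsep⟩
  exact h1.trans h2

private lemma rHat_le_sHat {T ε δ : ℝ} (hε : 0 < ε) (hδ : 0 < δ) :
    rHat dist φ Set.univ T ε δ ≤ sHat dist φ Set.univ T ε δ := by
  obtain ⟨E, hsep, hspan⟩ := exists_max_sep (ballHat dist φ T ε δ)
    (mem_ballHat_self hδ hε) (fun h => ballHat_comm.1 h)
  have h1 : rHat dist φ Set.univ T ε δ ≤ E.encard := by
    refine iInf₂_le E ⟨Set.subset_univ E, fun z _ => ?_⟩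
    obtain ⟨y, hy, hz⟩ := hspan z
    exact Set.mem_biUnion hy hz
  have h2 : E.encard ≤ sHat dist φ Set.univ T ε δ :=
    le_iSup₂ (f := fun (E : Set X) (_ : E ⊆ Set.univ ∧ sepHat dist φ T ε δ E) => E.encard) E
      ⟨Set.subset_univ E, sep_of_pairwise _ (mem_ballHat_self hδ hε) hsep⟩
  exact h1.trans h2

private lemma sB_le_rB {T ε : ℝ} (hε : 0 < ε) :
    sB dist φ Set.univ T (2*ε) ≤ rB dist φ Set.univ T ε := by
  refine le_iInf₂ fun F hF => ?_
  refine iSup₂_le fun E hE => ?_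
  refine encard_le_of_inj E F (ballB dist φ T (2*ε)) (ballB dist φ T ε)
    (pairwise_of_sep hE.2) ?_ ?_
  · intro z
    have := hF.2 (Set.mem_univ z)
    simpa using this
  · intro y x x' hx hx' u hu
    calc dist (φ u x) (φ u x') ≤ dist (φ u x) (φ u y) + dist (φ u y) (φ u x') :=
          dist_triangle _ _ _
      _ < ε + ε := add_lt_add (by rw [dist_comm]; exact hx u hu) (hx' u hu)
      _ = 2*ε := by ring

private lemma sHat_le_sB (h0 : ∀ z : X, φ 0 z = z) {T ε δ : ℝ} (hε : 0 < ε) (hδ : 0 < δ) :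
    sHat dist φ Set.univ T ε δ ≤ sB dist φ Set.univ T ε := by
  refine iSup₂_le fun E hE => ?_
  refine le_iSup₂ (f := fun (E : Set X) (_ : E ⊆ Set.univ ∧ sepB dist φ T ε E) => E.encard) E
    ⟨hE.1, ?_⟩
  refine sep_of_pairwise _ (mem_ballB_self hε) ?_
  intro x hx y hy hb
  exact pairwise_of_sep hE.2 x hx y hy (ballB_subset_ballHat h0 hδ x hb)

end EntropyAux


section RateAux

private lemma elog_mono {x y : ℕ∞} (h : x ≤ y) : elog x ≤ elog y := by
  unfold elog
  rcases eq_or_ne y ⊤ with rfl | hy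
  · simp
  have hx : x ≠ ⊤ := fun hx => hy (top_le_iff.1 (hx ▸ h))
  rw [if_neg hx, if_neg hy]
  rcases eq_or_ne x 0 with rfl | hx0
  · rw [if_pos rfl]; exact bot_le
  have hy0 : y ≠ 0 := fun h0 => hx0 (le_antisymm (h0 ▸ h) (zero_le : 0 ≤ x))
  rw [if_neg hx0, if_neg hy0]
  refine EReal.coe_le_coe_iff.2 (Real.log_le_log ?_ ?_)
  · have : x.toNat ≠ 0 := by simp [ENat.toNat_eq_zero, hx0, hx]
    exact_mod_cast Nat.pos_of_ne_zero this
  · exact_mod_cast ENat.toNat_le_toNat h hy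

private lemma elog_coe {m : ℕ} (hm : m ≠ 0) : elog (m : ℕ∞) = ((Real.log m : ℝ) : EReal) := by
  unfold elog
  rw [if_neg (by simp), if_neg (by exact_mod_cast hm)]
  simp

private lemma elog_zero : elog 0 = ⊥ := by unfold elog; simp

private lemma elog_top : elog ⊤ = ⊤ := by unfold elog; simp

private lemma rate_mono {f g : ℝ → ℕ∞} (h : ∀ᶠ T in Filter.atTop, f T ≤ g T) :
    rate f ≤ rate g := by
  refine Filter.limsup_le_limsup ?_
  filter_upwards [h, eventually_ge_atTop (1:ℝ)] with T hfg hT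
  exact mul_le_mul_of_nonneg_left (elog_mono hfg)
    (EReal.coe_nonneg.2 (inv_nonneg.2 (by linarith)))

private lemma rate_nat_mul_le {f : ℝ → ℕ∞} {N : ℕ} (hN : 1 ≤ N) :
    rate (fun T => (N : ℕ∞) * f T) ≤ rate f := by
  set c := Real.log N with hc
  have hc0 : 0 ≤ c := Real.log_nonneg (by exact_mod_cast hN)
  set u : ℝ → EReal := fun T => ((T⁻¹ * c : ℝ) : EReal) with hu
  set v : ℝ → EReal := fun T => ((T⁻¹ : ℝ) : EReal) * elog (f T) with hv
  have hub : Filter.limsup u atTop = 0 := by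
    have h1 : Filter.Tendsto (fun T : ℝ => T⁻¹ * c) atTop (nhds 0) := by
      simpa using tendsto_inv_atTop_zero.mul_const c
    have h2 : Filter.Tendsto u atTop (nhds ((0:ℝ) : EReal)) := EReal.tendsto_coe.2 h1
    rw [show ((0:ℝ) : EReal) = (0 : EReal) by norm_cast] at h2
    exact h2.limsup_eq
  have key : ∀ᶠ T in Filter.atTop,
      ((T⁻¹:ℝ) : EReal) * elog ((N:ℕ∞) * f T) ≤ u T + v T := by
    filter_upwards [eventually_gt_atTop (0:ℝ)] with T hT
    have hTpos : (0:EReal) < ((T⁻¹:ℝ):EReal) := EReal.coe_pos.2 (inv_pos.2 hT)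
    have hN0 : (N : ℕ∞) ≠ 0 := by exact_mod_cast (by omega : N ≠ 0)
    rcases eq_or_ne (f T) ⊤ with hfT | hfT
    · rw [hu, hv]; simp only
      rw [hfT, ENat.mul_top hN0, elog_top, EReal.mul_top_of_pos hTpos,
        EReal.coe_add_top]
    rcases eq_or_ne (f T) 0 with hfT0 | hfT0
    · rw [hfT0, mul_zero, elog_zero, EReal.mul_bot_of_pos hTpos]
      exact bot_le
    · set m := (f T).toNat with hmdef
      have hfm : f T = (m : ℕ∞) := (ENat.coe_toNat hfT).symm
      have hm : m ≠ 0 := by simp [hmdef, ENat.toNat_eq_zero, hfT0, hfT]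
      rw [hu, hv]; simp only
      rw [hfm, show ((N:ℕ∞) * (m:ℕ∞)) = ((N*m : ℕ) : ℕ∞) by push_cast; ring,
        elog_coe (Nat.mul_ne_zero (by omega) hm), elog_coe hm,
        ← EReal.coe_mul, ← EReal.coe_mul, ← EReal.coe_add]
      refine EReal.coe_le_coe_iff.2 (le_of_eq ?_)
      push_cast
      rw [Real.log_mul (by exact_mod_cast (by omega : N ≠ 0)) (by exact_mod_cast hm)]
      ring
  have hadd : Filter.limsup (fun T => u T + v T) atTop ≤
      Filter.limsup u atTop + Filter.limsup v atTop := by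
    refine EReal.limsup_add_le ?_ ?_
    · left; rw [hub]; exact EReal.zero_ne_bot
    · left; rw [hub]; exact EReal.zero_ne_top
  calc rate (fun T => (N:ℕ∞) * f T) ≤ Filter.limsup (fun T => u T + v T) atTop :=
        Filter.limsup_le_limsup key
    _ ≤ Filter.limsup u atTop + Filter.limsup v atTop := hadd
    _ = rate f := by rw [hub, zero_add]; rfl

end RateAux


section KeyAux

variable {X : Type*} [MetricSpace X] {φ : ℝ → X → X}

private lemma ballHat_shift (hsf : IsSemiflow φ) {ε2 η T : ℝ}
    (H : ∀ s ∈ Set.Icc (0:ℝ) 1, ∀ a b : X, dist a b < η → dist (φ s a) (φ s b) < ε2)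
    {x y : X} (hy : y ∈ ballHat dist φ T η 1 x) {u : ℝ} (hu1 : 1 ≤ u) (huT : u ≤ T + 1) :
    dist (φ u x) (φ u y) < ε2 := by
  have ht' : u - 1 ∈ Set.Icc (0:ℝ) T := ⟨by linarith, by linarith⟩
  have hd := hy (u-1) ht'
  obtain ⟨s, hs, hds⟩ := exists_dDelta_lt one_pos hd
  rw [← hsf.2 s (u-1) hs.1 ht'.1 x, ← hsf.2 s (u-1) hs.1 ht'.1 y] at hds
  have hτ : (1 - s) ∈ Set.Icc (0:ℝ) 1 := ⟨by linarith [hs.2], by linarith [hs.1]⟩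
  have hkey := H (1-s) hτ _ _ hds
  rw [← hsf.2 (1-s) (s+(u-1)) hτ.1 (by linarith [hs.1, ht'.1]) x,
      ← hsf.2 (1-s) (s+(u-1)) hτ.1 (by linarith [hs.1, ht'.1]) y,
      show (1-s) + (s+(u-1)) = u by ring] at hkey
  exact hkey

private lemma key_count [CompactSpace X] (hsf : IsSemiflow φ) {ε2 η : ℝ} (hε2 : 0 < ε2)
    (H : ∀ s ∈ Set.Icc (0:ℝ) 1, ∀ a b : X, dist a b < η → dist (φ s a) (φ s b) < ε2)
    (t : Finset X) (ht : (Set.univ : Set X) ⊆ ⋃ c ∈ t, Metric.ball c (η/2)) (T : ℝ) :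
    sB dist φ Set.univ T (2*ε2) ≤ ((t.card + 1 : ℕ) : ℕ∞) * rHat dist φ Set.univ T η 1 := by
  set R := rHat dist φ Set.univ T η 1 with hR
  rcases eq_or_ne R ⊤ with hRtop | hRtop
  · rw [hRtop, ENat.mul_top (by exact_mod_cast (by omega : t.card + 1 ≠ 0))]
    exact le_top
  obtain ⟨F, hFspan, hFcard⟩ : ∃ F, spanHat dist φ Set.univ T η 1 F ∧ F.encard ≤ R := by
    have hlt : rHat dist φ Set.univ T η 1 < R + 1 := by
      rw [← hR]; exact (ENat.lt_add_one_iff hRtop).2 le_rfl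
    rw [rHat] at hlt
    obtain ⟨F, hF⟩ := iInf_lt_iff.1 hlt
    obtain ⟨hFspan, hFcard⟩ := iInf_lt_iff.1 hF
    exact ⟨F, hFspan, (ENat.lt_add_one_iff hRtop).1 hFcard⟩
  have hFfin : F.Finite :=
    Set.encard_lt_top_iff.1 (hFcard.trans_lt (lt_top_iff_ne_top.2 hRtop))
  refine iSup₂_le fun E hE => ?_
  have hspan2 : ∀ z : X, ∃ p : X × X, (p ∈ F ×ˢ (↑t : Set X)) ∧
      z ∈ ballHat dist φ T η 1 p.1 ∧ z ∈ Metric.ball p.2 (η/2) := by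
    intro z
    have h1 := hFspan.2 (Set.mem_univ z)
    simp only [Set.mem_iUnion] at h1
    obtain ⟨y, hy, hzy⟩ := h1
    have h2 := ht (Set.mem_univ z)
    simp only [Set.mem_iUnion] at h2
    obtain ⟨c, hc, hzc⟩ := h2
    exact ⟨(y, c), ⟨hy, hc⟩, hzy, hzc⟩
  choose g hgmem hgball hgc using hspan2
  have hinj : Set.InjOn g E := by
    intro x hx x' hx' hgg
    have hball : x' ∈ ballB dist φ T (2*ε2) x := by
      intro u hu
      rcases le_or_gt u 1 with hu1 | hu1
      · have hdx := hgc x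
        have hdx' := hgc x'
        rw [hgg] at hdx
        have hdist : dist x x' < η := by
          have := dist_triangle x (g x').2 x'
          rw [Metric.mem_ball] at hdx hdx'
          rw [dist_comm (g x').2 x'] at this
          linarith
        have := H u ⟨hu.1, hu1⟩ x x' hdist
        linarith
      · have hb1 := hgball x
        have hb2 := hgball x'
        rw [hgg] at hb1
        have h1 := ballHat_shift hsf H hb1 hu1.le (by linarith [hu.2])
        have h2 := ballHat_shift hsf H hb2 hu1.le (by linarith [hu.2])
        have := dist_triangle (φ u x) (φ u (g x').1) (φ u x')
        rw [dist_comm (φ u x) (φ u (g x').1)] at this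
        linarith
    exact (pairwise_of_sep hE.2 x hx x' hx' hball).symm
  have himg : g '' E ⊆ F ×ˢ (↑t : Set X) := by rintro _ ⟨x, _, rfl⟩; exact hgmem x
  have hprodfin : (F ×ˢ (↑t : Set X)).Finite := hFfin.prod t.finite_toSet
  have hprodcard : (F ×ˢ (↑t : Set X)).encard ≤ ((t.card + 1 : ℕ) : ℕ∞) * F.encard := by
    rw [hprodfin.encard_eq_coe_toFinset_card, hFfin.encard_eq_coe_toFinset_card,
      show hprodfin.toFinset = hFfin.toFinset ×ˢ t.finite_toSet.toFinset from
        (Set.Finite.toFinset_prod _ _).symm,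
      Finset.card_product]
    rw [show t.finite_toSet.toFinset = t from Finset.finite_toSet_toFinset t]
    rw [← Nat.cast_mul]
    exact_mod_cast (by nlinarith [hFfin.toFinset.card.zero_le] :
      hFfin.toFinset.card * t.card ≤ (t.card + 1) * hFfin.toFinset.card)
  calc E.encard = (g '' E).encard := hinj.encard_image.symm
    _ ≤ (F ×ˢ (↑t : Set X)).encard := Set.encard_mono himg
    _ ≤ ((t.card + 1 : ℕ) : ℕ∞) * F.encard := hprodcard
    _ ≤ ((t.card + 1 : ℕ) : ℕ∞) * R := mul_le_mul_right hFcard _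

end KeyAux

/-- For a continuous semiflow on a compact metric space, the modified
entropies coincide with Bowen's topological entropy (the common value of the separated-set
and spanning-set entropies): `ĥ_r(φ) = ĥ_s(φ) = h_top(φ)`. -/
theorem stmt6 {X : Type*} [MetricSpace X] [CompactSpace X] (φ : ℝ → X → X)
    (hφ : IsContSemiflow φ) :
    hHatR dist φ Set.univ = hHatS dist φ Set.univ ∧
    hHatS dist φ Set.univ = hSB dist φ Set.univ ∧
    hSB dist φ Set.univ = hRB dist φ Set.univ := by
  obtain ⟨hsf, hcont⟩ := hφ
  have h0 : ∀ z : X, φ 0 z = z := hsf.1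
  -- Uniform continuity of the time-[0,1] flow map on the compact space.
  have hUC : ∀ ε2 : ℝ, 0 < ε2 → ∃ η > 0, ∀ s ∈ Set.Icc (0:ℝ) 1, ∀ a b : X,
      dist a b < η → dist (φ s a) (φ s b) < ε2 := by
    intro ε2 hε2
    have hK : IsCompact ((Set.Icc (0:ℝ) 1) ×ˢ (Set.univ : Set X)) :=
      isCompact_Icc.prod isCompact_univ
    have hcsub : ContinuousOn (fun p : ℝ × X => φ p.1 p.2)
        ((Set.Icc (0:ℝ) 1) ×ˢ (Set.univ : Set X)) :=
      hcont.mono (Set.prod_mono Set.Icc_subset_Ici_self subset_rfl)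
    have hucont := hK.uniformContinuousOn_of_continuous hcsub
    rw [Metric.uniformContinuousOn_iff] at hucont
    obtain ⟨η, hη, hH⟩ := hucont ε2 hε2
    refine ⟨η, hη, fun s hs a b hab => ?_⟩
    have hd : dist ((s,a) : ℝ × X) ((s,b) : ℝ × X) < η := by
      rw [Prod.dist_eq]
      simp only [dist_self]
      rw [max_eq_right dist_nonneg]
      exact hab
    exact hH (s, a) (Set.mk_mem_prod hs (Set.mem_univ a))
      (s, b) (Set.mk_mem_prod hs (Set.mem_univ b)) hd
  have I1 : hHatR dist φ Set.univ ≤ hHatS dist φ Set.univ := by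
    refine iSup₂_le fun δ hδ => iSup₂_le fun ε hε => ?_
    refine le_trans (rate_mono (.of_forall fun T => rHat_le_sHat hε hδ)) ?_
    exact le_iSup₂_of_le δ hδ (le_iSup₂_of_le ε hε le_rfl)
  have I2 : hHatS dist φ Set.univ ≤ hSB dist φ Set.univ := by
    refine iSup₂_le fun δ hδ => iSup₂_le fun ε hε => ?_
    refine le_trans (rate_mono (.of_forall fun T => sHat_le_sB h0 hε hδ)) ?_
    exact le_iSup₂_of_le ε hε le_rfl
  have I3 : hSB dist φ Set.univ ≤ hRB dist φ Set.univ := by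
    refine iSup₂_le fun ε hε => ?_
    have hhalf : (0:ℝ) < ε/2 := by linarith
    have hmono : ∀ T, sB dist φ Set.univ T ε ≤ rB dist φ Set.univ T (ε/2) := by
      intro T
      calc sB dist φ Set.univ T ε = sB dist φ Set.univ T (2*(ε/2)) := by
            rw [show (2:ℝ)*(ε/2) = ε by ring]
        _ ≤ rB dist φ Set.univ T (ε/2) := sB_le_rB hhalf
    refine le_trans (rate_mono (.of_forall hmono)) ?_
    exact le_iSup₂_of_le (ε/2) hhalf le_rfl
  have I4 : hRB dist φ Set.univ ≤ hSB dist φ Set.univ := by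
    refine iSup₂_le fun ε hε => ?_
    exact le_trans (rate_mono (.of_forall fun T => rB_le_sB hε))
      (le_iSup₂_of_le ε hε le_rfl)
  have I5 : hSB dist φ Set.univ ≤ hHatR dist φ Set.univ := by
    refine iSup₂_le fun ε hε => ?_
    have hhalf : (0:ℝ) < ε/2 := by linarith
    obtain ⟨η, hη, H⟩ := hUC (ε/2) hhalf
    obtain ⟨t, ht⟩ := isCompact_univ.elim_finite_subcover
      (fun c : X => Metric.ball c (η/2)) (fun c => Metric.isOpen_ball)
      (fun x _ => Set.mem_iUnion.2 ⟨x, Metric.mem_ball_self (by linarith)⟩)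
    have hkey : ∀ T, sB dist φ Set.univ T ε ≤
        ((t.card + 1 : ℕ) : ℕ∞) * rHat dist φ Set.univ T η 1 := by
      intro T
      calc sB dist φ Set.univ T ε = sB dist φ Set.univ T (2*(ε/2)) := by
            rw [show (2:ℝ)*(ε/2) = ε by ring]
        _ ≤ _ := key_count hsf hhalf H t ht T
    refine le_trans (rate_mono (.of_forall hkey)) ?_
    refine le_trans (rate_nat_mul_le (by omega)) ?_
    exact le_iSup₂_of_le 1 one_pos (le_iSup₂_of_le η hη le_rfl)
  exact ⟨le_antisymm I1 (I2.trans I5), le_antisymm I2 (I5.trans I1), le_antisymm I3 I4⟩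
end

section
/- Let (X,φ,D,I) be an impulsive dynamical system on a compact metric space with I(D) ∩ D = ∅ and I Lipschitz. Then the quotient (π(X), d̃) by the relation x ∼ y iff x = y, y = I(x), x = I(y), or I(x) = I(y), with the chain pseudometric d̃, is a compact metric space (in particular, d̃ is a genuine metric: d̃(x̃,ỹ) = 0 implies x̃ = ỹ). -/
open Set Filter
open scoped ENNReal NNReal Classical Real

universe u

variable {α : Type*}

/-- First impulse time `τ₁(x) = inf { t > 0 : φ_t(x) ∈ D }` (`∞` if the orbit never meets `D`). -/
noncomputable def tau1 [MetricSpace α] (φ : ℝ → α → α) (D : Set α) (x : α) : ℝ≥0∞ :=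
  sInf (ENNReal.ofReal '' {t : ℝ | 0 < t ∧ φ t x ∈ D})

/-- The successive impulse points `x⁰ = x`, `x¹ = φ_{τ₁(x)}(x)`,
`x^{n+1} = φ_{τ₁(I(xⁿ))}(I(xⁿ))`. -/
noncomputable def impSeq [MetricSpace α] (φ : ℝ → α → α) (D : Set α) (I : α → α) (x : α) :
    ℕ → α
  | 0 => x
  | n + 1 =>
      let y := if n = 0 then x else I (impSeq φ D I x n)
      φ (tau1 φ D y).toReal y

/-- The successive impulse times `τ_0 = 0`, `τ_{n+1}(x) = τ_n(x) + τ₁(I(xⁿ))`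
(with `τ_1(x) = τ₁(x)`). -/
noncomputable def impTime [MetricSpace α] (φ : ℝ → α → α) (D : Set α) (I : α → α) (x : α) :
    ℕ → ℝ≥0∞
  | 0 => 0
  | n + 1 => impTime φ D I x n + tau1 φ D (if n = 0 then x else I (impSeq φ D I x n))

/-- `(X,φ,D,I)` is an impulsive dynamical system: `φ` is a continuous semiflow, `D` a proper
closed subset, `I` continuous on `D`, every first impulse time is positive, and the total
impulse time is infinite. -/
def IsIDS [MetricSpace α] (φ : ℝ → α → α) (D : Set α) (I : α → α) : Prop :=
  ((∀ x, φ 0 x = x) ∧ ∀ s t : ℝ, 0 ≤ s → 0 ≤ t → ∀ x, φ (s + t) x = φ s (φ t x)) ∧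
  ContinuousOn (fun p : ℝ × α => φ p.1 p.2) (Set.Ici 0 ×ˢ Set.univ) ∧
  IsClosed D ∧ D ≠ Set.univ ∧ ContinuousOn I D ∧
  (∀ x, 0 < tau1 φ D x) ∧ (∀ x, (⨆ n, impTime φ D I x n) = ⊤)

/-- The tube `D_η = ⋃_{x ∈ D} { φ_t(x) : 0 < t < η }`. -/
def tube (φ : ℝ → α → α) (D : Set α) (η : ℝ) : Set α :=
  ⋃ x ∈ D, (fun t => φ t x) '' Set.Ioo 0 η

/-- `X_η = X \ (D ∪ D_η)`. -/
def Xtube (φ : ℝ → α → α) (D : Set α) (η : ℝ) : Set α :=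
  (D ∪ tube φ D η)ᶜ

/-- `ψ` is the impulsive semiflow associated to `(X,φ,D,I)`: it agrees with the impulsive
drift `γ_x` on each interval between consecutive impulse times. -/
def IsImpulsive [MetricSpace α] (φ : ℝ → α → α) (D : Set α) (I : α → α)
    (ψ : ℝ → α → α) : Prop :=
  ∀ x : α,
    (∀ t : ℝ, 0 ≤ t → ENNReal.ofReal t < impTime φ D I x 1 → ψ t x = φ t x) ∧
    (∀ n : ℕ, 1 ≤ n → ∀ t : ℝ, impTime φ D I x n ≤ ENNReal.ofReal t →
      ENNReal.ofReal t < impTime φ D I x (n + 1) →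
      ψ t x = φ (t - (impTime φ D I x n).toReal) (I (impSeq φ D I x n)))

/-- A regular impulsive dynamical system, with the constants `η, ξ` of the definition. -/
def IsRegularIDS [MetricSpace α] (φ : ℝ → α → α) (D : Set α) (I : α → α) (η ξ : ℝ) : Prop :=
  IsIDS φ D I ∧ (I '' D) ∩ D = ∅ ∧ (∃ K : NNReal, LipschitzOnWith K I D) ∧
  0 < ξ ∧ ξ < η / 4 ∧ IsOpen (tube φ D ξ) ∧
  ((fun x => φ ξ x) '' tube φ D ξ ⊆ Xtube φ D ξ) ∧
  (∀ x ∈ I '' D, ∀ t : ℝ, 0 < t → t ≤ ξ → φ t x ∉ I '' D)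

/-- `τ*`: equal to `τ₁` off `D` and to `0` on `D`. -/
noncomputable def tauStar [MetricSpace α] (φ : ℝ → α → α) (D : Set α) (x : α) : ℝ≥0∞ :=
  if x ∈ D then 0 else tau1 φ D x

/-- The relation identifying `x` with `I x` for `x ∈ D`. -/
def IRel (D : Set α) (I : α → α) (x y : α) : Prop :=
  x = y ∨ (x ∈ D ∧ y = I x) ∨ (y ∈ D ∧ x = I y) ∨ (x ∈ D ∧ y ∈ D ∧ I x = I y)

/-- The chain pseudometric on the quotient by `IRel`:
`d̃(x̃,ỹ) = inf { Σ d(pᵢ,qᵢ) }` over chains `p₀ ∈ x̃`, `q_n ∈ ỹ`, `qᵢ ∼ p_{i+1}`. -/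
noncomputable def chainDist (d : α → α → ℝ) (D : Set α) (I : α → α) (x y : α) : ℝ :=
  sInf {r : ℝ | ∃ (n : ℕ) (p q : ℕ → α), IRel D I x (p 0) ∧ IRel D I (q n) y ∧
    (∀ i < n, IRel D I (q i) (p (i + 1))) ∧
    r = ∑ i ∈ Finset.range (n + 1), d (p i) (q i)}


/-- The quotient of `X` by the relation `IRel D I`, equipped with the chain pseudometric,
is a compact metric space: packaged as the existence of a compact metric space `Y` and a
surjection `p : X → Y` identifying exactly the `IRel`-classes, whose distance is the chain
pseudometric. -/
def IsQuotMetric {X : Type*} [MetricSpace X] (D : Set X) (I : X → X)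
    (Y : Type*) (m : MetricSpace Y) (p : X → Y) : Prop :=
  letI := m
  Function.Surjective p ∧ CompactSpace Y ∧
  (∀ x y : X, p x = p y ↔ {z : X | IRel D I x z} = {z : X | IRel D I y z}) ∧
  (∀ x y : X, dist (p x) (p y) = chainDist dist D I x y)

/-
Since `I(D) ∩ D = ∅`, the class of a point of `D` consists of its image under `I` together with the
points of `D` having the same image, and every class not meeting `D` is a singleton. Hence `x ∼ y`
iff `J x = J y`, where `J = collapse D I` is `I` on `D` and the identity elsewhere.

The chain distance `d̃` dominates `|g x - g y| / K` for every `K`-Lipschitz function `g` constant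
on classes, since along a chain the increments of `g` telescope. To separate two different classes
it therefore suffices to find such a `g`. If `x` lies outside the closed set `E = D ∪ I(D)`, its
class is `{x}` and `z ↦ min (d(z, x)) ε` with `ε < d(x, E)` works. If `x, y ∈ E`, the function
`z ↦ min (d(J z, J x)) δ`, where `δ` is the gap between the compact sets `D` and `I(D)`, is
Lipschitz on `E`, and McShane's extension of it to `X` works.
-/

open Metric

noncomputable def collapse (D : Set α) (I : α → α) (x : α) : α :=
  if x ∈ D then I x else x

section IRel

variable {D : Set α} {I : α → α} {x y z : α}

theorem IRel.refl (x : α) : IRel D I x x := Or.inl rfl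

theorem IRel.symm (h : IRel D I x y) : IRel D I y x := by
  unfold IRel at *
  aesop

theorem iRel_iff_collapse_eq (hID : I '' D ∩ D = ∅) :
    IRel D I x y ↔ collapse D I x = collapse D I y := by
  have hI : ∀ a ∈ D, I a ∉ D := fun a ha hIa =>
    (Set.eq_empty_iff_forall_notMem.1 hID) (I a) ⟨⟨a, ha, rfl⟩, hIa⟩
  unfold IRel collapse
  grind

theorem IRel.trans (hID : I '' D ∩ D = ∅) (h₁ : IRel D I x y) (h₂ : IRel D I y z) :
    IRel D I x z :=
  (iRel_iff_collapse_eq hID).2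
    (((iRel_iff_collapse_eq hID).1 h₁).trans ((iRel_iff_collapse_eq hID).1 h₂))

theorem IRel.mem_of_ne (h : IRel D I x y) (hne : x ≠ y) :
    x ∈ D ∪ I '' D ∧ y ∈ D ∪ I '' D := by
  rcases h with rfl | ⟨hx, rfl⟩ | ⟨hy, rfl⟩ | ⟨hx, hy, -⟩
  · exact absurd rfl hne
  · exact ⟨Or.inl hx, Or.inr ⟨x, hx, rfl⟩⟩
  · exact ⟨Or.inr ⟨y, hy, rfl⟩, Or.inl hy⟩
  · exact ⟨Or.inl hx, Or.inl hy⟩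

theorem setOf_iRel_eq_iff (hID : I '' D ∩ D = ∅) :
    {z | IRel D I x z} = {z | IRel D I y z} ↔ IRel D I x y :=
  ⟨fun h => (Set.ext_iff.1 h y).2 (.refl y),
    fun h => Set.ext fun _ => ⟨h.symm.trans hID, h.trans hID⟩⟩

def iRelSetoid (hID : I '' D ∩ D = ∅) : Setoid α where
  r := IRel D I
  iseqv := ⟨IRel.refl, IRel.symm, IRel.trans hID⟩

end IRel

section Chains

variable {X : Type*} [PseudoMetricSpace X] {D : Set X} {I : X → X} {x x' y y' z a b : X} {r s : ℝ}

-- `chainDist dist D I x y` is by definition the infimum of this set.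
variable (D I) in
def chainLengths (x y : X) : Set ℝ :=
  {r : ℝ | ∃ (n : ℕ) (p q : ℕ → X), IRel D I x (p 0) ∧ IRel D I (q n) y ∧
    (∀ i < n, IRel D I (q i) (p (i + 1))) ∧
    r = ∑ i ∈ Finset.range (n + 1), dist (p i) (q i)}

theorem dist_mem_chainLengths (ha : IRel D I x a) (hb : IRel D I b y) :
    dist a b ∈ chainLengths D I x y :=
  ⟨0, fun _ => a, fun _ => b, ha, hb, by simp, by simp⟩

theorem nonneg_of_mem_chainLengths (hr : r ∈ chainLengths D I x y) : 0 ≤ r := by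
  obtain ⟨n, p, q, -, -, -, rfl⟩ := hr
  exact Finset.sum_nonneg fun i _ => dist_nonneg

theorem chainLengths_nonempty (x y : X) : (chainLengths D I x y).Nonempty :=
  ⟨_, dist_mem_chainLengths (.refl x) (.refl y)⟩

theorem chainDist_le (hr : r ∈ chainLengths D I x y) : chainDist dist D I x y ≤ r :=
  csInf_le ⟨0, fun _ => nonneg_of_mem_chainLengths⟩ hr

theorem le_chainDist {c : ℝ} (h : ∀ r ∈ chainLengths D I x y, c ≤ r) :
    c ≤ chainDist dist D I x y :=
  le_csInf (chainLengths_nonempty x y) h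

theorem chainDist_le_dist : chainDist dist D I x y ≤ dist x y :=
  chainDist_le (dist_mem_chainLengths (.refl x) (.refl y))

theorem chainDist_self : chainDist dist D I x x = 0 :=
  le_antisymm (dist_self x ▸ chainDist_le_dist) (le_chainDist fun _ => nonneg_of_mem_chainLengths)

theorem chainLengths_subset_swap : chainLengths D I x y ⊆ chainLengths D I y x := by
  rintro r ⟨n, p, q, hp, hq, hl, rfl⟩
  refine ⟨n, fun i => q (n - i), fun i => p (n - i), by simpa using hq.symm,
    by simpa using hp.symm, fun i hi => ?_, ?_⟩
  · have h := (hl (n - (i + 1)) (by omega)).symm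
    rwa [show n - (i + 1) + 1 = n - i by omega] at h
  · rw [← Finset.sum_range_reflect]
    refine Finset.sum_congr rfl fun i hi => ?_
    rw [dist_comm, show n + 1 - 1 - i = n - i by omega]

theorem chainDist_comm : chainDist dist D I x y = chainDist dist D I y x :=
  congrArg sInf (chainLengths_subset_swap.antisymm chainLengths_subset_swap)

theorem chainLengths_mono (hID : I '' D ∩ D = ∅) (hx : IRel D I x' x) (hy : IRel D I y y') :
    chainLengths D I x y ⊆ chainLengths D I x' y' := by
  rintro r ⟨n, p, q, hp, hq, hl, rfl⟩
  exact ⟨n, p, q, hx.trans hID hp, hq.trans hID hy, hl, rfl⟩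

theorem chainDist_congr (hID : I '' D ∩ D = ∅) (hx : IRel D I x x') (hy : IRel D I y y') :
    chainDist dist D I x y = chainDist dist D I x' y' :=
  congrArg sInf ((chainLengths_mono hID hx.symm hy).antisymm (chainLengths_mono hID hx hy.symm))

theorem add_mem_chainLengths (hID : I '' D ∩ D = ∅) (hr : r ∈ chainLengths D I x y)
    (hs : s ∈ chainLengths D I y z) : r + s ∈ chainLengths D I x z := by
  obtain ⟨m, p₁, q₁, hp₁, hq₁, hl₁, rfl⟩ := hr
  obtain ⟨n, p₂, q₂, hp₂, hq₂, hl₂, rfl⟩ := hs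
  let concat (u v : ℕ → X) (i : ℕ) : X := if i ≤ m then u i else v (i - (m + 1))
  refine ⟨m + 1 + n, concat p₁ p₂, concat q₁ q₂, by simpa [concat] using hp₁, ?_, ?_, ?_⟩
  · simpa [concat, show ¬ m + 1 + n ≤ m by omega, show m + 1 + n - (m + 1) = n by omega] using hq₂
  · intro i hi
    rcases lt_trichotomy i m with h | rfl | h
    · simpa [concat, h.le, show i + 1 ≤ m by omega] using hl₁ i h
    · simpa [concat] using hq₁.trans hID hp₂
    · simpa [concat, show ¬ i ≤ m by omega, show ¬ i < m by omega,
        show i + 1 - (m + 1) = i - (m + 1) + 1 by omega]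
        using hl₂ (i - (m + 1)) (by omega)
  · rw [show m + 1 + n + 1 = (m + 1) + (n + 1) by omega,
      Finset.sum_range_add (fun i => dist (concat p₁ p₂ i) (concat q₁ q₂ i))]
    congr 1
    · exact Finset.sum_congr rfl fun i hi => by
        simp [concat, Nat.lt_succ_iff.1 (Finset.mem_range.1 hi)]
    · exact Finset.sum_congr rfl fun i _ => by simp [concat, show ¬ m + 1 + i ≤ m by omega]

theorem chainDist_triangle (hID : I '' D ∩ D = ∅) :
    chainDist dist D I x z ≤ chainDist dist D I x y + chainDist dist D I y z := by
  refine le_of_forall_pos_lt_add fun ε hε => ?_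
  obtain ⟨r, hr, hr_lt⟩ := exists_lt_of_csInf_lt (chainLengths_nonempty x y)
    (lt_add_of_pos_right (chainDist dist D I x y) (half_pos hε))
  obtain ⟨s, hs, hs_lt⟩ := exists_lt_of_csInf_lt (chainLengths_nonempty y z)
    (lt_add_of_pos_right (chainDist dist D I y z) (half_pos hε))
  calc chainDist dist D I x z ≤ r + s := chainDist_le (add_mem_chainLengths hID hr hs)
    _ < chainDist dist D I x y + chainDist dist D I y z + ε := by
      linarith

theorem dist_le_mul_of_mem_chainLengths {K : ℝ≥0} {g : X → ℝ} (hg : LipschitzWith K g)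
    (hinv : ∀ a b, IRel D I a b → g a = g b) (hr : r ∈ chainLengths D I x y) :
    dist (g x) (g y) ≤ K * r := by
  obtain ⟨n, p, q, hp, hq, hl, rfl⟩ := hr
  have htel : g x - g y = ∑ i ∈ Finset.range (n + 1), (g (p i) - g (q i)) := by
    rw [Finset.sum_range_succ, Finset.sum_congr rfl fun i hi =>
      by rw [hinv _ _ (hl i (Finset.mem_range.1 hi))], Finset.sum_range_sub',
      hinv _ _ hp, hinv _ _ hq]
    ring
  calc dist (g x) (g y) = |∑ i ∈ Finset.range (n + 1), (g (p i) - g (q i))| := by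
        rw [Real.dist_eq, htel]
    _ ≤ ∑ i ∈ Finset.range (n + 1), dist (g (p i)) (g (q i)) := Finset.abs_sum_le_sum_abs _ _
    _ ≤ ∑ i ∈ Finset.range (n + 1), K * dist (p i) (q i) :=
        Finset.sum_le_sum fun i _ => hg.dist_le_mul _ _
    _ = K * ∑ i ∈ Finset.range (n + 1), dist (p i) (q i) := (Finset.mul_sum _ _ _).symm

theorem dist_le_mul_chainDist {K : ℝ≥0} {g : X → ℝ} (hg : LipschitzWith K g)
    (hinv : ∀ a b, IRel D I a b → g a = g b) : dist (g x) (g y) ≤ K * chainDist dist D I x y := by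
  rcases eq_zero_or_pos K with rfl | hK
  · obtain ⟨r, hr⟩ := chainLengths_nonempty (D := D) (I := I) x y
    simpa using dist_le_mul_of_mem_chainLengths hg hinv hr
  · rw [← div_le_iff₀' (by exact_mod_cast hK)]
    exact le_chainDist fun r hr =>
      (div_le_iff₀' (by exact_mod_cast hK)).2 (dist_le_mul_of_mem_chainLengths hg hinv hr)

theorem chainDist_pos_of_separating {K : ℝ≥0} {g : X → ℝ} (hg : LipschitzWith K g)
    (hinv : ∀ a b, IRel D I a b → g a = g b) (hxy : g x ≠ g y) : 0 < chainDist dist D I x y :=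
  pos_of_mul_pos_right ((dist_pos.2 hxy).trans_le (dist_le_mul_chainDist hg hinv)) K.coe_nonneg

end Chains

section Positivity

variable {X : Type*} [MetricSpace X] {D : Set X} {I : X → X} {x y : X}

theorem chainDist_pos_of_notMem_closure (hx : x ∉ closure (D ∪ I '' D)) (hxy : x ≠ y) :
    0 < chainDist dist D I x y := by
  obtain ⟨ε, hε, hxE⟩ : ∃ ε > 0, ∀ e ∈ D ∪ I '' D, ε ≤ dist x e := by
    rw [Metric.mem_closure_iff] at hx
    push Not at hx
    exact hx
  have hinv : ∀ a b, IRel D I a b → min (dist a x) ε = min (dist b x) ε := by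
    intro a b hab
    by_cases hne : a = b
    · rw [hne]
    obtain ⟨ha, hb⟩ := hab.mem_of_ne hne
    rw [min_eq_right (dist_comm x a ▸ hxE a ha), min_eq_right (dist_comm x b ▸ hxE b hb)]
  refine chainDist_pos_of_separating ((LipschitzWith.dist_left x).min_const ε) hinv ?_
  rw [dist_self, min_eq_left hε.le]
  exact (lt_min (dist_pos.2 hxy.symm) hε).ne

theorem LipschitzOnWith.dist_collapse_le {K : ℝ≥0} (hK : LipschitzOnWith K I D) {a b : X}
    (hab : a ∈ D ↔ b ∈ D) : dist (collapse D I a) (collapse D I b) ≤ (K + 1) * dist a b := by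
  by_cases ha : a ∈ D
  · simp only [collapse, ha, hab.1 ha, if_true]
    exact (hK.dist_le_mul a ha b (hab.1 ha)).trans
      (mul_le_mul_of_nonneg_right (by simp) dist_nonneg)
  · simp only [collapse, ha, mt hab.2 ha, if_false]
    exact le_mul_of_one_le_left dist_nonneg (by simp)

theorem LipschitzOnWith.min_dist_collapse {K δ : ℝ≥0} (hK : LipschitzOnWith K I D)
    (hgap : ∀ a ∈ D, ∀ b ∈ I '' D, (δ : ℝ) ≤ dist a b) (c : X) :
    LipschitzOnWith (K + 1) (fun z => min (dist (collapse D I z) c) δ) (D ∪ I '' D) := by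
  refine LipschitzOnWith.of_dist_le_mul fun a ha b hb => ?_
  by_cases hab : a ∈ D ↔ b ∈ D
  · calc _ ≤ dist (collapse D I a) (collapse D I b) := by
          simpa using ((LipschitzWith.dist_left c).min_const (δ : ℝ)).dist_le_mul
            (collapse D I a) (collapse D I b)
      _ ≤ _ := by push_cast; exact hK.dist_collapse_le hab
  · have hδ : (δ : ℝ) ≤ dist a b := by
      by_cases haD : a ∈ D
      · exact hgap a haD b (hb.resolve_left fun hbD => hab (iff_of_true haD hbD))
      · rw [dist_comm]
        exact hgap b (by_contra fun hbD => hab (iff_of_false haD hbD)) a (ha.resolve_left haD)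
    have hmem (z : X) : min (dist (collapse D I z) c) δ ∈ Set.Icc 0 (δ : ℝ) :=
      ⟨le_min dist_nonneg δ.2, min_le_right _ _⟩
    calc _ ≤ (δ : ℝ) := by simpa using Real.dist_le_of_mem_Icc (hmem a) (hmem b)
      _ ≤ dist a b := hδ
      _ ≤ _ := le_mul_of_one_le_left dist_nonneg (by simp)

theorem chainDist_pos_of_mem (hD : IsCompact D) {K : ℝ≥0} (hK : LipschitzOnWith K I D)
    (hID : I '' D ∩ D = ∅) (hx : x ∈ D ∪ I '' D) (hy : y ∈ D ∪ I '' D) (hxy : ¬ IRel D I x y) :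
    0 < chainDist dist D I x y := by
  obtain ⟨δ, hδ, hgap⟩ := exists_pos_forall_lt_edist hD
    (hD.image_of_continuousOn hK.continuousOn).isClosed
    (Set.disjoint_iff_inter_eq_empty.2 (by rwa [Set.inter_comm]))
  obtain ⟨g, hg, hgh⟩ := (hK.min_dist_collapse (fun a ha b hb =>
    (by exact_mod_cast edist_nndist a b ▸ hgap a ha b hb : (δ : ℝ) < dist a b).le)
    (collapse D I x)).extend_real
  refine chainDist_pos_of_separating hg (fun a b hab => ?_) ?_
  · by_cases hne : a = b
    · rw [hne]
    obtain ⟨ha, hb⟩ := hab.mem_of_ne hne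
    rw [← hgh ha, ← hgh hb]
    dsimp only
    rw [(iRel_iff_collapse_eq hID).1 hab]
  · rw [← hgh hx, ← hgh hy]
    dsimp only
    rw [dist_self, min_eq_left δ.coe_nonneg]
    exact (lt_min (dist_pos.2 fun e => hxy ((iRel_iff_collapse_eq hID).2 e.symm))
      (NNReal.coe_pos.2 hδ)).ne

theorem chainDist_pos [CompactSpace X] (hD : IsClosed D) {K : ℝ≥0} (hK : LipschitzOnWith K I D)
    (hID : I '' D ∩ D = ∅) (hxy : ¬ IRel D I x y) : 0 < chainDist dist D I x y := by
  have hE : IsClosed (D ∪ I '' D) :=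
    hD.union (hD.isCompact.image_of_continuousOn hK.continuousOn).isClosed
  by_cases hx : x ∈ D ∪ I '' D
  · by_cases hy : y ∈ D ∪ I '' D
    · exact chainDist_pos_of_mem hD.isCompact hK hID hx hy hxy
    · rw [chainDist_comm]
      exact chainDist_pos_of_notMem_closure (by rwa [hE.closure_eq]) fun h => hxy (h ▸ .refl y)
  · exact chainDist_pos_of_notMem_closure (by rwa [hE.closure_eq]) fun h => hxy (h ▸ .refl x)

end Positivity

section Quotient

variable {X : Type*} {D : Set X} {I : X → X}

noncomputable abbrev chainPseudoMetricSpace [PseudoMetricSpace X] (hID : I '' D ∩ D = ∅) :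
    PseudoMetricSpace (Quotient (iRelSetoid hID)) where
  dist := Quotient.lift₂ (chainDist dist D I) fun _ _ _ _ => chainDist_congr hID
  dist_self := Quotient.ind fun _ => chainDist_self
  dist_comm := Quotient.ind₂ fun _ _ => chainDist_comm
  dist_triangle := by
    rintro ⟨x⟩ ⟨y⟩ ⟨z⟩
    exact chainDist_triangle hID

noncomputable abbrev chainMetricSpace [MetricSpace X] [CompactSpace X] (hD : IsClosed D) {K : ℝ≥0}
    (hK : LipschitzOnWith K I D) (hID : I '' D ∩ D = ∅) :
    MetricSpace (Quotient (iRelSetoid hID)) where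
  __ := chainPseudoMetricSpace hID
  eq_of_dist_eq_zero {a b} := Quotient.inductionOn₂ a b fun _ _ h =>
    Quotient.sound <| by_contra fun hxy => (chainDist_pos hD hK hID hxy).ne' h

end Quotient

/-- For an impulsive dynamical system on a compact metric space with
`I(D) ∩ D = ∅` and `I` Lipschitz, the quotient `(π(X), d̃)` by the relation `∼`, with the
chain pseudometric `d̃`, is a compact metric space. -/
theorem stmt16 {X : Type u} [MetricSpace X] [CompactSpace X]
    (φ : ℝ → X → X) (D : Set X) (I : X → X) (hIDS : IsIDS φ D I)
    (hID : (I '' D) ∩ D = ∅) (hLip : ∃ K : NNReal, LipschitzOnWith K I D) :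
    ∃ (Y : Type u) (m : MetricSpace Y) (p : X → Y), IsQuotMetric D I Y m p := by
  obtain ⟨K, hK⟩ := hLip
  let m := chainMetricSpace hIDS.2.2.1 hK hID
  -- `Quotient` has the quotient topology as an instance; `IsQuotMetric` refers to the metric one.
  let _ : TopologicalSpace (Quotient (iRelSetoid hID)) := m.toUniformSpace.toTopologicalSpace
  have hπ : LipschitzWith 1 (Quotient.mk (iRelSetoid hID)) :=
    LipschitzWith.of_dist_le_mul fun x y => by
      rw [NNReal.coe_one, one_mul]
      exact chainDist_le_dist
  exact ⟨_, m, Quotient.mk _, Quotient.mk_surjective,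
    Quotient.mk_surjective.compactSpace hπ.continuous,
    fun x y => Quotient.eq.trans (setOf_iRel_eq_iff hID).symm, fun _ _ => rfl⟩
end
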